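/- For a semi-ideal ultraparallel trapezoid with ideal upper vertices A₁, A₂ decorated with horocycles, signed upper edge length l₁₂, lateral edge lengths r₁, r₂ (signed distances from B₁, B₂ to the horocycles at A₁, A₂), and lower edge length a₁₂, one has cosh(a₁₂) = 1 + 2e^{l₁₂ − r₁ − r₂}. -/

import Mathlib

/-- The Minkowski bilinear form on `ℝ^{1,2}`. -/
def mink (x y : Fin 3 → ℝ) : ℝ := -(x 0 * y 0) + x 1 * y 1 + x 2 * y 2

/-! Writing `lᵢ = cᵢ (Bᵢ + m)`, the orthogonality `⟨Bᵢ, m⟩ = 0` gives `⟨Bᵢ, lᵢ⟩ = -cᵢ`, so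
`cᵢ = e^{rᵢ}`, and `⟨l₁, l₂⟩ = c₁ c₂ (⟨B₁, B₂⟩ + ⟨m, m⟩) = e^{r₁ + r₂} (1 - cosh a₁₂)`.
Comparing with `⟨l₁, l₂⟩ = -2 e^{l₁₂}` gives the formula. -/

section Bilinear

variable (x y z : Fin 3 → ℝ) (c : ℝ)

lemma mink_comm : mink x y = mink y x := by
  simp only [mink]; ring

lemma mink_add_left : mink (x + y) z = mink x z + mink y z := by
  simp only [mink, Pi.add_apply]; ring

lemma mink_add_right : mink x (y + z) = mink x y + mink x z := by
  simp only [mink, Pi.add_apply]; ring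

lemma mink_smul_left : mink (c • x) y = c * mink x y := by
  simp only [mink, Pi.smul_apply, smul_eq_mul]; ring

lemma mink_smul_right : mink x (c • y) = c * mink x y := by
  simp only [mink, Pi.smul_apply, smul_eq_mul]; ring

end Bilinear

section Projection

variable {m B B₁ B₂ : Fin 3 → ℝ}

lemma mink_smul_add_eq_neg (hB : mink B B = -1) (hBm : mink B m = 0)
    (c : ℝ) : mink B (c • (B + m)) = -c := by
  rw [mink_smul_right, mink_add_right, hB, hBm]; ring

lemma mink_smul_add_smul_add (hm : mink m m = 1) (hB₁m : mink B₁ m = 0)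
    (hB₂m : mink B₂ m = 0) (c₁ c₂ : ℝ) :
    mink (c₁ • (B₁ + m)) (c₂ • (B₂ + m)) = c₁ * c₂ * (mink B₁ B₂ + 1) := by
  rw [mink_smul_left, mink_smul_right, mink_add_left, mink_add_right, mink_add_right,
    hB₁m, mink_comm m B₂, hB₂m, hm]
  ring

end Projection

/-- `lᵢ` is the light-like polar vector of the horocycle at `Aᵢ`, `Bᵢ` its orthogonal projection
to the lower line with unit normal `m`; the signed lengths enter through `⟨l₁, l₂⟩ = -2 e^{l₁₂}`,
`⟨Bᵢ, lᵢ⟩ = -e^{rᵢ}` and `cosh a₁₂ = -⟨B₁, B₂⟩`. -/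
theorem semi_ideal_trapezoid_lower_edge_general
    (m B₁ B₂ l₁ l₂ : Fin 3 → ℝ) (l₁₂ r₁ r₂ a₁₂ : ℝ)
    (hm : mink m m = 1)
    (hB₁ : mink B₁ B₁ = -1) (hB₁m : mink B₁ m = 0)
    (hB₂ : mink B₂ B₂ = -1) (hB₂m : mink B₂ m = 0)
    (hproj₁ : ∃ c : ℝ, 0 < c ∧ l₁ = c • (B₁ + m))
    (hproj₂ : ∃ c : ℝ, 0 < c ∧ l₂ = c • (B₂ + m))
    (hl₁₂ : mink l₁ l₂ = -2 * Real.exp l₁₂)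
    (hr₁ : mink B₁ l₁ = -Real.exp r₁)
    (hr₂ : mink B₂ l₂ = -Real.exp r₂)
    (halen : Real.cosh a₁₂ = -(mink B₁ B₂)) :
    Real.cosh a₁₂ = 1 + 2 * Real.exp (l₁₂ - r₁ - r₂) := by
  obtain ⟨c₁, -, rfl⟩ := hproj₁
  obtain ⟨c₂, -, rfl⟩ := hproj₂
  have hc₁ : c₁ = Real.exp r₁ :=
    neg_inj.mp <| (mink_smul_add_eq_neg hB₁ hB₁m c₁).symm.trans hr₁
  have hc₂ : c₂ = Real.exp r₂ :=
    neg_inj.mp <| (mink_smul_add_eq_neg hB₂ hB₂m c₂).symm.trans hr₂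
  rw [mink_smul_add_smul_add hm hB₁m hB₂m, hc₁, hc₂] at hl₁₂
  rw [halen, Real.exp_sub, Real.exp_sub]
  field_simp
  linarith

/-- For a semi-ideal ultraparallel trapezoid with decorated ideal upper vertices: the ideal
vertices are given by future light-like polar vectors `l₁, l₂` of the decorating horocycles,
`B₁, B₂` on the lower line (with unit normal `m`) are their orthogonal projections
(`lᵢ` a positive multiple of `Bᵢ + m`), the signed upper edge length satisfies
`⟨l₁, l₂⟩ = -2 e^{l₁₂}`, the signed lateral edge lengths satisfy `⟨Bᵢ, lᵢ⟩ = -e^{rᵢ}`, and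
`a₁₂ ≥ 0` is the lower edge length (`cosh a₁₂ = -⟨B₁, B₂⟩`).  Then
`cosh a₁₂ = 1 + 2 e^{l₁₂ - r₁ - r₂}`. -/
theorem semi_ideal_trapezoid_lower_edge
    (m B₁ B₂ l₁ l₂ : Fin 3 → ℝ) (l₁₂ r₁ r₂ a₁₂ : ℝ)
    (hm : mink m m = 1)
    (hB₁ : mink B₁ B₁ = -1) (hB₁0 : 0 < B₁ 0) (hB₁m : mink B₁ m = 0)
    (hB₂ : mink B₂ B₂ = -1) (hB₂0 : 0 < B₂ 0) (hB₂m : mink B₂ m = 0)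
    (hl₁ : mink l₁ l₁ = 0) (hl₁0 : 0 < l₁ 0)
    (hl₂ : mink l₂ l₂ = 0) (hl₂0 : 0 < l₂ 0)
    (hind : ¬ ∃ t : ℝ, l₂ = t • l₁)
    (hproj₁ : ∃ c : ℝ, 0 < c ∧ l₁ = c • (B₁ + m))
    (hproj₂ : ∃ c : ℝ, 0 < c ∧ l₂ = c • (B₂ + m))
    (hl₁₂ : mink l₁ l₂ = -2 * Real.exp l₁₂)
    (hr₁ : mink B₁ l₁ = -Real.exp r₁)
    (hr₂ : mink B₂ l₂ = -Real.exp r₂)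
    (ha : 0 ≤ a₁₂) (halen : Real.cosh a₁₂ = -(mink B₁ B₂)) :
    Real.cosh a₁₂ = 1 + 2 * Real.exp (l₁₂ - r₁ - r₂) :=
  semi_ideal_trapezoid_lower_edge_general m B₁ B₂ l₁ l₂ l₁₂ r₁ r₂ a₁₂ hm hB₁ hB₁m hB₂ hB₂m hproj₁
    hproj₂ hl₁₂ hr₁ hr₂ halen
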